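/- Let L_1 and L_2 be L-cross-sections of IS_n and let φ: L_1 → L_2 be a semigroup isomorphism. Then there exists a permutation Θ of N_n such that φ(α) = Θ^{-1} α Θ for every α ∈ L_1; in other words, every isomorphism of L-cross-sections of IS_n is a conjugacy by a permutation. -/

import Mathlib

open scoped Classical

/-- `IS n` is the full inverse symmetric semigroup: all partial bijections of `Fin n`;
multiplication is composition of partial maps (maps acting on the right). -/
abbrev IS (n : ℕ) : Type := PEquiv (Fin n) (Fin n)

noncomputable section
namespace ISW

instance {n : ℕ} : Mul (IS n) := ⟨PEquiv.trans⟩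
instance {n : ℕ} : One (IS n) := ⟨PEquiv.refl _⟩

/-- The domain of a partial bijection. -/
def pdom {n : ℕ} (f : IS n) : Set (Fin n) := {x | (f x).isSome}

/-- The range of a partial bijection. -/
def pran {n : ℕ} (f : IS n) : Set (Fin n) := {y | (f.symm y).isSome}

/-- Green's R-relation on a semigroup (with identity): `u R v` iff `uS = vS`. -/
def GreenR {S : Type*} [Mul S] (u v : S) : Prop :=
  {w | ∃ s, w = u * s} = {w | ∃ s, w = v * s}

/-- Green's L-relation on a semigroup (with identity): `u L v` iff `Su = Sv`. -/
def GreenL {S : Type*} [Mul S] (u v : S) : Prop :=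
  {w | ∃ s, w = s * u} = {w | ∃ s, w = s * v}

/-- An R-cross-section: a subsemigroup containing exactly one element of every
Green R-class. -/
def IsRCrossSection {S : Type*} [Mul S] (T : Set S) : Prop :=
  (∀ a ∈ T, ∀ b ∈ T, a * b ∈ T) ∧ ∀ x : S, ∃! t, t ∈ T ∧ GreenR x t

/-- An L-cross-section: a subsemigroup containing exactly one element of every
Green L-class. -/
def IsLCrossSection {S : Type*} [Mul S] (T : Set S) : Prop :=
  (∀ a ∈ T, ∀ b ∈ T, a * b ∈ T) ∧ ∀ x : S, ∃! t, t ∈ T ∧ GreenL x t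

/-- `φ` realizes a semigroup isomorphism from `T₁` onto `T₂`. -/
def IsSemiIso {S₁ S₂ : Type*} [Mul S₁] [Mul S₂] (T₁ : Set S₁) (T₂ : Set S₂)
    (φ : S₁ → S₂) : Prop :=
  Set.BijOn φ T₁ T₂ ∧ ∀ a ∈ T₁, ∀ b ∈ T₁, φ (a * b) = φ a * φ b

/-- The partial wreath product `IS m ≀_p IS n`: pairs `(f, a)` with `a ∈ IS n` and
`f` a partial map from `Fin n` to `IS m` whose domain equals the domain of `a`. -/
structure PW (m n : ℕ) where
  base : IS n
  fib : Fin n → Option (IS m)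
  dom_eq : ∀ x, (fib x).isSome ↔ (base x).isSome

/-- Multiplication of the partial wreath product: `(f,a)·(g,b) = (f g^a, ab)`. -/
instance {m n : ℕ} : Mul (PW m n) where
  mul u v :=
    { base := u.base * v.base
      fib := fun x => Option.map₂ (· * ·) (u.fib x) ((u.base x).bind v.fib)
      dom_eq := by
        intro x
        show _ ↔ (((u.base x).bind v.base)).isSome
        cases h : u.base x with
        | none =>
          have : u.fib x = none := by
            have := (u.dom_eq x)
            simp [h] at this
            simpa using Option.not_isSome_iff_eq_none.mp (by simp [this])
          simp [h, this, Option.map₂]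
        | some y =>
          have hf : (u.fib x).isSome := (u.dom_eq x).mpr (by simp [h])
          obtain ⟨s, hs⟩ := Option.isSome_iff_exists.mp hf
          cases h2 : v.base y with
          | none =>
            have : v.fib y = none := by
              have := (v.dom_eq y)
              simp [h2] at this
              simpa using Option.not_isSome_iff_eq_none.mp (by simp [this])
            simp [h, h2, hs, this, Option.map₂]
          | some z =>
            have hg : (v.fib y).isSome := (v.dom_eq y).mpr (by simp [h2])
            obtain ⟨t, ht⟩ := Option.isSome_iff_exists.mp hg
            simp [h, h2, hs, ht, Option.map₂] }

/-- The identity of the partial wreath product. -/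
instance {m n : ℕ} : One (PW m n) where
  one :=
    { base := 1
      fib := fun _ => some 1
      dom_eq := by intro x; simp; rfl }

/-- `chainFun L j x`: with `L` listing the elements of a block in increasing order and
`0 ≤ j < |L|` (`j` is the 0-based version of the paper's index), this is the value at `x` of
the chain `a_{i,j}`: the partial bijection with domain everything except `L[j]`,
sending `L[l] ↦ L[l+1]` for `l < j` and fixing all other points. -/
def chainFun {n : ℕ} (L : List (Fin n)) (j : ℕ) (x : Fin n) : Option (Fin n) :=
  if x ∈ L then
    if L.idxOf x = j then none
    else if L.idxOf x < j then L[L.idxOf x + 1]?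
    else some x
  else some x

/-- The generators `a_{i,j}` attached to an ordered decomposition with blocks `B i`. -/
def RGens {n s : ℕ} (B : Fin s → List (Fin n)) : Set (IS n) :=
  {a : IS n | ∃ i : Fin s, ∃ j : ℕ, j < (B i).length ∧ ∀ x, a x = chainFun (B i) j x}

/-- `R(M⃗₁, …, M⃗ₛ)`: the subsemigroup of `IS n` generated by the chains `a_{i,j}`
together with the identity map. -/
def RSec {n s : ℕ} (B : Fin s → List (Fin n)) : Set (IS n) :=
  (Subsemigroup.closure (RGens B ∪ {1}) : Subsemigroup (IS n))

/-- A decomposition of `Fin n` into disjoint nonempty blocks, each block equipped with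
a linear order, recorded by listing the elements of each block in increasing order. -/
structure OrderedPartition (n s : ℕ) where
  B : Fin s → List (Fin n)
  nonempty : ∀ i, B i ≠ []
  nodup : ∀ i, (B i).Nodup
  disjoint : ∀ i j, i ≠ j → ∀ x, x ∈ B i → x ∉ B j
  cover : ∀ x, ∃ i, x ∈ B i

/-- The chain `a_{i,j}` of the block listed by `L`, viewed inside `IS(M_i)`, i.e. embedded
into `IS n` as a partial bijection whose domain is contained in the block: it is defined on
`L` minus `L[j]`, sends `L[l] ↦ L[l+1]` for `l < j` and fixes the other points of `L`. -/
def chainFunB {n : ℕ} (L : List (Fin n)) (j : ℕ) (x : Fin n) : Option (Fin n) :=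
  if x ∈ L then
    if L.idxOf x = j then none
    else if L.idxOf x < j then L[L.idxOf x + 1]?
    else some x
  else none

/-- The generators of `R(M⃗)` inside `IS(M)` (embedded in `IS n`), `M` listed by `L`. -/
def BlockGens {n : ℕ} (L : List (Fin n)) : Set (IS n) :=
  {a : IS n | ∃ j : ℕ, j < L.length ∧ ∀ x, a x = chainFunB L j x}

/-- The identity of `IS(M)` (embedded in `IS n`): the identity map of the block listed by `L`. -/
def idOn {n : ℕ} (L : List (Fin n)) : Set (IS n) :=
  {a : IS n | ∀ x, a x = if x ∈ L then some x else none}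

/-- The R-cross-section `R(M⃗)` of `IS(M)`, embedded into `IS n`, for the block listed by `L`. -/
def RSecBlock {n : ℕ} (L : List (Fin n)) : Set (IS n) :=
  (Subsemigroup.closure (BlockGens L ∪ idOn L) : Subsemigroup (IS n))

/-- The wreath product `R_i ≀_p R(M⃗_i)` where `R(M⃗_i) ⊆ IS(M_i)`, `M_i` listed by `L`,
and `R_i = T ⊆ IS m`, realized inside `PW m n` via the natural embedding
`IS m ≀_p IS(M_i) ⊆ IS m ≀_p IS n`. -/
def WBlock (m n : ℕ) (L : List (Fin n)) (T : Set (IS m)) : Set (PW m n) :=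
  {u : PW m n | u.base ∈ RSecBlock L ∧ ∀ x f, u.fib x = some f → f ∈ T}

/-- The element `e' = (0̄, 1)` of `IS m ≀_p IS n`: the second component is the identity of
`IS n` and the first component sends every point to the empty map `0` of `IS m`. -/
def ezero (m n : ℕ) : PW m n where
  base := 1
  fib := fun _ => some ⊥
  dom_eq := by intro x; simp; rfl

/-! In an L-cross-section `T` of `IS n` there is exactly one element `t_A` with range `A` for
every `A ⊆ N_n`; `t_∅ = 0`, and the elements of rank one are the `v ≠ 0` with `T v ⊆ {0, v}`.
This description is purely algebraic, so an isomorphism `φ` maps `t_{x}` to `t'_{Θ x}` for a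
permutation `Θ`. For `u ∈ T` the product `t_{x} u` has range `{u x}` (empty when `x ∉ dom u`),
so comparing the ranges of `φ (t_{x} u) = t'_{Θ x} φ(u)` gives `φ u (Θ x) = Θ (u x)`. -/

variable {n : ℕ}

theorem mul_apply (f g : IS n) (x : Fin n) : (f * g) x = (f x).bind g := rfl

protected theorem mul_assoc (f g h : IS n) : f * g * h = f * (g * h) :=
  PEquiv.trans_assoc f g h

theorem mem_pran {f : IS n} {y : Fin n} : y ∈ pran f ↔ ∃ x, f x = some y := by
  simp [pran, Option.isSome_iff_exists, PEquiv.eq_some_iff]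

theorem pran_mul_subset (f g : IS n) : pran (f * g) ⊆ pran g := by
  intro z hz
  obtain ⟨x, hx⟩ := mem_pran.1 hz
  obtain ⟨y, -, hy⟩ := Option.bind_eq_some_iff.1 hx
  exact mem_pran.2 ⟨y, hy⟩

theorem pran_eq_empty_iff {f : IS n} : pran f = ∅ ↔ f = ⊥ := by
  refine ⟨fun h => PEquiv.ext fun x => ?_, fun h => by simp [h, pran]⟩
  rw [PEquiv.bot_apply, Option.eq_none_iff_forall_ne_some]
  intro y hy
  simpa [h] using mem_pran.2 ⟨x, hy⟩

theorem pran_ofSet (A : Set (Fin n)) : pran (PEquiv.ofSet A) = A := by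
  ext y
  simp [mem_pran, PEquiv.ofSet_eq_some_iff]

theorem mul_symm_mul_of_pran_subset {u v : IS n} (h : pran u ⊆ pran v) : u * v.symm * v = u := by
  refine PEquiv.ext fun x => ?_
  cases hx : u x with
  | none => simp [mul_apply, hx]
  | some y =>
    obtain ⟨z, hz⟩ := mem_pran.1 (h (mem_pran.2 ⟨x, hx⟩))
    simp [mul_apply, hx, (PEquiv.eq_some_iff v).2 hz, hz]

theorem greenL_iff_pran_eq {u v : IS n} : GreenL u v ↔ pran u = pran v := by
  constructor
  · intro h
    have mem_left {a b : IS n} (h : GreenL a b) : ∃ s, a = s * b :=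
      (congrArg (a ∈ ·) h).mp ⟨1, (PEquiv.refl_trans a).symm⟩
    obtain ⟨s, hs⟩ := mem_left h
    obtain ⟨t, ht⟩ := mem_left (Eq.symm h : GreenL v u)
    exact (hs ▸ pran_mul_subset s v).antisymm (ht ▸ pran_mul_subset t u)
  · intro h
    have factor {a b : IS n} (hab : pran a ⊆ pran b) (s : IS n) : s * a = s * a * b.symm * b := by
      conv_lhs => rw [← mul_symm_mul_of_pran_subset hab]
      simp only [ISW.mul_assoc]
    ext w
    exact ⟨fun ⟨s, hs⟩ => ⟨s * u * v.symm, hs.trans (factor h.le s)⟩,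
      fun ⟨s, hs⟩ => ⟨s * v * u.symm, hs.trans (factor h.ge s)⟩⟩

theorem pran_mul_of_pran_eq_singleton {s : IS n} {x : Fin n} (hs : pran s = {x}) (f : IS n) :
    pran (s * f) = {y | f x = some y} := by
  obtain ⟨a, ha⟩ := mem_pran.1 (hs ▸ rfl : x ∈ pran s)
  ext y
  simp only [mem_pran, mul_apply, Option.bind_eq_some_iff, Set.mem_ofPred_eq]
  constructor
  · rintro ⟨b, c, hc, hy⟩
    have hcx : c ∈ pran s := mem_pran.2 ⟨b, hc⟩
    rw [hs] at hcx
    rwa [Set.mem_singleton_iff.1 hcx] at hy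
  · exact fun hy => ⟨a, x, ha, hy⟩

namespace IsLCrossSection

variable {T : Set (IS n)}

theorem exists_pran_eq (hT : IsLCrossSection T) (A : Set (Fin n)) : ∃ t ∈ T, pran t = A := by
  obtain ⟨t, ⟨ht, hL⟩, -⟩ := hT.2 (PEquiv.ofSet A)
  exact ⟨t, ht, (greenL_iff_pran_eq.1 hL).symm.trans (pran_ofSet A)⟩

theorem eq_of_pran_eq (hT : IsLCrossSection T) {t t' : IS n} (ht : t ∈ T) (ht' : t' ∈ T)
    (h : pran t = pran t') : t = t' :=
  (hT.2 t).unique ⟨ht, greenL_iff_pran_eq.2 rfl⟩ ⟨ht', greenL_iff_pran_eq.2 h⟩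

theorem bot_mem (hT : IsLCrossSection T) : ⊥ ∈ T := by
  obtain ⟨t, ht, h⟩ := hT.exists_pran_eq ∅
  exact pran_eq_empty_iff.1 h ▸ ht

theorem exists_pran_eq_singleton_iff (hT : IsLCrossSection T) {v : IS n} (hv : v ∈ T) :
    (∃ y, pran v = {y}) ↔ v ≠ ⊥ ∧ ∀ w ∈ T, w * v = ⊥ ∨ w * v = v := by
  constructor
  · rintro ⟨y, hy⟩
    refine ⟨fun hbot =>
      Set.singleton_ne_empty y (hy.symm.trans (pran_eq_empty_iff.2 hbot)), fun w hw => ?_⟩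
    rcases Set.subset_singleton_iff_eq.1 (hy ▸ pran_mul_subset w v) with h | h
    · exact Or.inl (pran_eq_empty_iff.1 h)
    · exact Or.inr (hT.eq_of_pran_eq (hT.1 w hw v hv) hv (h.trans hy.symm))
  · rintro ⟨hne, hideal⟩
    obtain ⟨y, hy⟩ := Set.nonempty_iff_ne_empty.2 (mt pran_eq_empty_iff.1 hne)
    obtain ⟨x, hxy⟩ := mem_pran.1 hy
    obtain ⟨s, hs, hsx⟩ := hT.exists_pran_eq {x}
    have hsv : pran (s * v) = {y} := by
      ext z
      simp [pran_mul_of_pran_eq_singleton hsx, hxy, eq_comm]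
    refine ⟨y, ?_⟩
    rcases hideal s hs with h | h
    · exact absurd (hsv.symm.trans (pran_eq_empty_iff.2 h)) (Set.singleton_ne_empty y)
    · rwa [h] at hsv

end IsLCrossSection

namespace IsSemiIso

variable {T₁ T₂ : Set (IS n)} {φ : IS n → IS n}

theorem map_bot (h₁ : IsLCrossSection T₁) (h₂ : IsLCrossSection T₂)
    (hφ : IsSemiIso T₁ T₂ φ) : φ ⊥ = ⊥ := by
  obtain ⟨b, hb, hφb⟩ := hφ.1.surjOn h₂.bot_mem
  calc φ ⊥ = φ (⊥ * b) := by rw [show (⊥ : IS n) * b = ⊥ from PEquiv.bot_trans b]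
    _ = φ ⊥ * ⊥ := by rw [hφ.2 ⊥ h₁.bot_mem b hb, hφb]
    _ = ⊥ := PEquiv.trans_bot _

theorem exists_pran_map_eq_singleton (h₁ : IsLCrossSection T₁) (h₂ : IsLCrossSection T₂)
    (hφ : IsSemiIso T₁ T₂ φ) {v : IS n} (hv : v ∈ T₁) {x : Fin n} (hx : pran v = {x}) :
    ∃ y, pran (φ v) = {y} := by
  obtain ⟨hne, hideal⟩ := (h₁.exists_pran_eq_singleton_iff hv).1 ⟨x, hx⟩
  have hbot := hφ.map_bot h₁ h₂
  refine (h₂.exists_pran_eq_singleton_iff (hφ.1.mapsTo hv)).2 ⟨fun h => ?_, fun w hw => ?_⟩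
  · exact hne (hφ.1.injOn hv h₁.bot_mem (h.trans hbot.symm))
  · obtain ⟨w, hw₁, rfl⟩ := hφ.1.surjOn hw
    rw [← hφ.2 w hw₁ v hv, ← hbot]
    exact (hideal w hw₁).imp (congrArg φ) (congrArg φ)

theorem exists_perm_pran_map_singleton (h₁ : IsLCrossSection T₁) (h₂ : IsLCrossSection T₂)
    (hφ : IsSemiIso T₁ T₂ φ) :
    ∃ Θ : Equiv.Perm (Fin n), ∀ x, ∀ v ∈ T₁, pran v = {x} → pran (φ v) = {Θ x} := by
  have hθ : ∀ x, ∃ y, ∀ v ∈ T₁, pran v = {x} → pran (φ v) = {y} := by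
    intro x
    obtain ⟨s, hs, hsx⟩ := h₁.exists_pran_eq {x}
    obtain ⟨y, hy⟩ := hφ.exists_pran_map_eq_singleton h₁ h₂ hs hsx
    exact ⟨y, fun v hv hvx => h₁.eq_of_pran_eq hv hs (hvx.trans hsx.symm) ▸ hy⟩
  choose θ hθ using hθ
  have hinj : Function.Injective θ := by
    intro x x' h
    obtain ⟨s, hs, hsx⟩ := h₁.exists_pran_eq {x}
    obtain ⟨s', hs', hsx'⟩ := h₁.exists_pran_eq {x'}
    have hφs : φ s = φ s' := h₂.eq_of_pran_eq (hφ.1.mapsTo hs) (hφ.1.mapsTo hs')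
      (by rw [hθ x s hs hsx, hθ x' s' hs' hsx', h])
    simpa [hsx, hsx'] using congrArg pran (hφ.1.injOn hs hs' hφs)
  exact ⟨Equiv.ofBijective θ (Finite.injective_iff_bijective.1 hinj), hθ⟩

theorem apply_perm_eq (h₁ : IsLCrossSection T₁) (h₂ : IsLCrossSection T₂)
    (hφ : IsSemiIso T₁ T₂ φ) {Θ : Equiv.Perm (Fin n)}
    (hΘ : ∀ x, ∀ v ∈ T₁, pran v = {x} → pran (φ v) = {Θ x}) {u : IS n} (hu : u ∈ T₁)
    (x : Fin n) : φ u (Θ x) = (u x).map Θ := by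
  obtain ⟨s, hs, hsx⟩ := h₁.exists_pran_eq {x}
  have hsu : pran (s * u) = {y | u x = some y} := pran_mul_of_pran_eq_singleton hsx u
  have hφsu : pran (φ (s * u)) = {z | φ u (Θ x) = some z} := by
    rw [hφ.2 s hs u hu, pran_mul_of_pran_eq_singleton (hΘ x s hs hsx)]
  cases hux : u x with
  | none =>
    have hsu_bot : s * u = ⊥ := pran_eq_empty_iff.1 (by simp [hsu, hux])
    rw [hsu_bot, hφ.map_bot h₁ h₂, pran_eq_empty_iff.2 rfl] at hφsu
    rw [Option.map_none, Option.eq_none_iff_forall_ne_some]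
    exact fun z hz => (hφsu ▸ hz : z ∈ (∅ : Set (Fin n)))
  | some y =>
    rw [hΘ y (s * u) (h₁.1 s hs u hu) (by simp [hsu, hux])] at hφsu
    exact (hφsu ▸ rfl : Θ y ∈ {z | φ u (Θ x) = some z})

end IsSemiIso

/-- every isomorphism of L-cross-sections of `IS n` is a conjugacy:
there is a permutation `Θ` with `φ(α) = Θ⁻¹ α Θ` for all `α` in the first cross-section. -/
theorem iso_lcross_is_conjugacy (n : ℕ) (T₁ T₂ : Set (IS n))
    (h₁ : IsLCrossSection T₁) (h₂ : IsLCrossSection T₂)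
    (φ : IS n → IS n) (hφ : IsSemiIso T₁ T₂ φ) :
    ∃ Θ : Equiv.Perm (Fin n),
      ∀ α ∈ T₁, φ α = (Equiv.toPEquiv (Θ⁻¹ : Equiv.Perm (Fin n))) * (α * Equiv.toPEquiv Θ) := by
  obtain ⟨Θ, hΘ⟩ := hφ.exists_perm_pran_map_singleton h₁ h₂
  refine ⟨Θ, fun α hα => PEquiv.ext fun z => ?_⟩
  obtain ⟨x, rfl⟩ := Θ.surjective z
  rw [hφ.apply_perm_eq h₁ h₂ hΘ hα x]
  simp only [mul_apply, Equiv.toPEquiv_apply, Equiv.Perm.coe_inv, Equiv.symm_apply_apply,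
    Option.bind_some]
  cases α x <;> rfl

end ISW
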